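/- Let X = (x_1,...,x_n) and Y = (y_1,...,y_n) be two lists of reals and let x_{(1)} ≤ ... ≤ x_{(n)} and y_{(1)} ≤ ... ≤ y_{(n)} be their sorted versions. Then MDPA(X, Y) = ∑_{i=1}^n |x_{(i)} − y_{(i)}|. -/
import Mathlib


/-- Minimum difference of pair assignments between two lists of `n` reals. -/
noncomputable def MDPA {n : ℕ} (x y : Fin n → ℝ) : ℝ :=
  Finset.univ.inf' Finset.univ_nonempty fun σ : Equiv.Perm (Fin n) => ∑ i, |x i - y (σ i)|


lemma exch {a1 a2 b1 b2 : ℝ} (ha : a1 ≤ a2) (hb : b1 ≤ b2) :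
    |a1 - b1| + |a2 - b2| ≤ |a1 - b2| + |a2 - b1| := by
  rcases abs_cases (a1 - b1) with ⟨h1, _⟩ | ⟨h1, _⟩ <;>
  rcases abs_cases (a2 - b2) with ⟨h2, _⟩ | ⟨h2, _⟩ <;>
  rcases abs_cases (a1 - b2) with ⟨h3, _⟩ | ⟨h3, _⟩ <;>
  rcases abs_cases (a2 - b1) with ⟨h4, _⟩ | ⟨h4, _⟩ <;>
  linarith

lemma key {n : ℕ} (a b : Fin n → ℝ) (ha : Monotone a) (hb : Monotone b)
    (π : Equiv.Perm (Fin n)) : ∑ i, |a i - b i| ≤ ∑ i, |a i - b (π i)| := by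
  suffices H : ∀ N : ℕ, ∀ π : Equiv.Perm (Fin n), π.support.card = N →
      ∑ i, |a i - b i| ≤ ∑ i, |a i - b (π i)| from H _ π rfl
  intro N
  induction N using Nat.strong_induction_on with
  | _ N IH =>
  intro π hN
  rcases eq_or_ne π 1 with rfl | hπ
  · simp
  · have hsupp : π.support.Nonempty := by
      rw [Finset.nonempty_iff_ne_empty, ne_eq, Equiv.Perm.support_eq_empty_iff]; exact hπ
    set j := π.support.max' hsupp with hjdef
    have hjmem : j ∈ π.support := Finset.max'_mem _ _
    have hjne : π j ≠ j := Equiv.Perm.mem_support.mp hjmem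
    have hπjlt : π j < j := by
      rcases lt_or_ge (π j) j with h | h
      · exact h
      · exfalso
        have : π j ∈ π.support := by
          rw [Equiv.Perm.mem_support]
          intro hc
          exact hjne (π.injective (by rw [hc]))
        have hle : π j ≤ j := Finset.le_max' _ _ this
        exact hjne (le_antisymm hle h)
    set i := π⁻¹ j with hidef
    have hπi : π i = j := by simp [hidef]
    have hij : i ≠ j := by
      intro h; rw [h] at hπi; exact hjne hπi
    have himem : i ∈ π.support := by
      rw [Equiv.Perm.mem_support, hπi]; exact fun h => hij h.symm
    have hilt : i < j := lt_of_le_of_ne (Finset.le_max' _ _ himem) hij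
    set π' := π * Equiv.swap i j with hπ'def
    have hπ'i : π' i = π j := by simp [hπ'def]
    have hπ'j : π' j = j := by simp [hπ'def, Equiv.swap_apply_right, hπi]
    have hπ'k : ∀ k, k ≠ i → k ≠ j → π' k = π k := by
      intro k hki hkj
      simp [hπ'def, Equiv.swap_apply_def, hki, hkj]
    -- support of π' strictly smaller
    have hsub : π'.support ⊂ π.support := by
      constructor
      · intro k hk
        rw [Equiv.Perm.mem_support] at hk ⊢
        by_cases hki : k = i
        · subst hki; rw [hπi]; exact fun h => hij h.symm
        · by_cases hkj : k = j
          · subst hkj; rw [hπ'j] at hk; exact absurd rfl hk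
          · rwa [hπ'k k hki hkj] at hk
      · intro hc
        have := hc hjmem
        rw [Equiv.Perm.mem_support, hπ'j] at this
        exact this rfl
    have hcard : π'.support.card < N := hN ▸ Finset.card_lt_card hsub
    have step1 : ∑ k, |a k - b k| ≤ ∑ k, |a k - b (π' k)| :=
      IH _ hcard π' rfl
    have step2 : ∑ k, |a k - b (π' k)| ≤ ∑ k, |a k - b (π k)| := by
      have hsplit : ∀ g : Fin n → ℝ,
          ∑ k, g k = g i + g j + ∑ k ∈ Finset.univ \ {i, j}, g k := by
        intro g
        rw [← Finset.sum_sdiff (Finset.subset_univ ({i, j} : Finset (Fin n))),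
          Finset.sum_pair hij]
        ring
      rw [hsplit fun k => |a k - b (π' k)|, hsplit fun k => |a k - b (π k)|]
      have hrest : ∑ k ∈ Finset.univ \ {i, j}, |a k - b (π' k)|
          = ∑ k ∈ Finset.univ \ {i, j}, |a k - b (π k)| := by
        apply Finset.sum_congr rfl
        intro k hk
        simp only [Finset.mem_sdiff, Finset.mem_insert, Finset.mem_singleton] at hk
        rw [hπ'k k (fun h => hk.2 (Or.inl h)) (fun h => hk.2 (Or.inr h))]
      rw [hrest, hπ'i, hπ'j, hπi]
      have := exch (ha hilt.le) (hb hπjlt.le) (a1 := a i) (a2 := a j)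
        (b1 := b (π j)) (b2 := b j)
      linarith [exch (a1 := a i) (a2 := a j) (b1 := b (π j)) (b2 := b j)
        (ha hilt.le) (hb hπjlt.le)]
    exact step1.trans step2


/-- if `xs`, `ys` are sorted (nondecreasing) rearrangements of `x`, `y`,
then `MDPA x y = ∑ i, |xs i - ys i|`. -/
theorem mdpa_eq_sorted_sum {n : ℕ} (x y xs ys : Fin n → ℝ)
    (hxs : Monotone xs) (hys : Monotone ys)
    (ρ τ : Equiv.Perm (Fin n)) (hx : xs = x ∘ ρ) (hy : ys = y ∘ τ) :
    MDPA x y = ∑ i, |xs i - ys i| := by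
  subst hx hy
  apply le_antisymm
  · have h : ∑ i, |(x ∘ ρ) i - (y ∘ τ) i| = ∑ i, |x i - y ((τ * ρ⁻¹) i)| := by
      rw [← Equiv.sum_comp ρ (fun i => |x i - y ((τ * ρ⁻¹) i)|)]
      simp
    rw [MDPA, h]
    exact Finset.inf'_le _ (Finset.mem_univ (τ * ρ⁻¹))
  · apply Finset.le_inf'
    intro σ _
    have h : ∑ i, |x i - y (σ i)| = ∑ j, |(x ∘ ρ) j - (y ∘ τ) ((τ⁻¹ * σ * ρ) j)| := by
      rw [← Equiv.sum_comp ρ (fun i => |x i - y (σ i)|)]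
      simp
    rw [h]
    exact key (x ∘ ρ) (y ∘ τ) hxs hys (τ⁻¹ * σ * ρ)
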